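/- arXiv:2410.09517 — 4 statements merged into one kernel-verified Lean document; each statement's English description precedes it below -/
import Mathlib

section
/- The covariant transform v(x) := B^{-T} v̂(B^{-1}(x - b)) maps rigid motions to rigid motions bijectively: v̂ is a rigid motion (affine with skew-symmetric linear part) if and only if v is. -/
open Matrix

/-- A rigid motion: a vector field `w(x) = a + Cx` with `C` skew-symmetric. -/
def IsRigidMotion {n : ℕ} (w : (Fin n → ℝ) → (Fin n → ℝ)) : Prop :=
  ∃ (a : Fin n → ℝ) (C : Matrix (Fin n) (Fin n) ℝ), Cᵀ = -C ∧ ∀ x, w x = a + C.mulVec x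

/-- The covariant transform `v(x) = B⁻ᵀ v̂(B⁻¹(x - b))` maps rigid motions to rigid
motions bijectively: `v̂` is a rigid motion if and only if `v` is. -/
theorem covariant_transform_rigid_motion_iff
    {n : ℕ} (B : Matrix (Fin n) (Fin n) ℝ) (hB : IsUnit B.det) (b : Fin n → ℝ)
    (vh v : (Fin n → ℝ) → (Fin n → ℝ))
    (hv : ∀ x, v x = (B⁻¹)ᵀ.mulVec (vh (B⁻¹.mulVec (x - b)))) :
    IsRigidMotion vh ↔ IsRigidMotion v := by
  have hBi : B⁻¹ * B = 1 := Matrix.nonsing_inv_mul B hB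
  have hBi' : B * B⁻¹ = 1 := Matrix.mul_nonsing_inv B hB
  constructor
  · rintro ⟨a, C, hC, ha⟩
    refine ⟨(B⁻¹)ᵀ.mulVec (a - C.mulVec (B⁻¹.mulVec b)), (B⁻¹)ᵀ * C * B⁻¹, ?_, ?_⟩
    · simp [Matrix.transpose_mul, hC, Matrix.mul_assoc, Matrix.neg_mul, Matrix.mul_neg]
    · intro x
      rw [hv x, ha]
      simp [Matrix.mulVec_add, Matrix.mulVec_sub, Matrix.mulVec_mulVec, Matrix.mul_assoc]
      abel
  · rintro ⟨a, C, hC, ha⟩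
    have hvh : ∀ y, vh y = Bᵀ.mulVec (v (B.mulVec y + b)) := by
      intro y
      rw [hv]
      simp [Matrix.mulVec_mulVec, hBi, ← Matrix.transpose_mul, hBi']
    refine ⟨Bᵀ.mulVec (a + C.mulVec b), Bᵀ * C * B, ?_, ?_⟩
    · simp [Matrix.transpose_mul, hC, Matrix.mul_assoc, Matrix.neg_mul, Matrix.mul_neg]
    · intro y
      rw [hvh y, ha]
      simp [Matrix.mulVec_add, Matrix.mulVec_mulVec, Matrix.mul_assoc]
      abel
end

section
/- On a nondegenerate triangle F with barycentric coordinates λ_0, λ_1, λ_2, if a polynomial p of degree at most 1 satisfies ∫_F λ_1 λ_2 q p dS = 0 for all q ∈ P_1(F), then p = 0. -/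
open MeasureTheory Set

/-!
Testing against `q = p` gives `∫_F λ₁ λ₂ p² = 0`. The integrand is continuous and nonnegative
on `F`, so it vanishes on `F`; since `λ₁ λ₂ > 0` in the interior of `F`, `p` vanishes there, and
hence on all of `F`, which is the closure of its interior.
-/

def AffineIndependent.affineBasis {ι k V P : Type*} [Fintype ι] [DivisionRing k]
    [AddCommGroup V] [Module k V] [AddTorsor V P] [FiniteDimensional k V] {p : ι → P}
    (hp : AffineIndependent k p) (hcard : Fintype.card ι = Module.finrank k V + 1) :
    AffineBasis ι k P :=
  ⟨p, hp, hp.affineSpan_eq_top_iff_card_eq_finrank_add_one.mpr hcard⟩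

@[simp]
theorem AffineIndependent.coe_affineBasis {ι k V P : Type*} [Fintype ι] [DivisionRing k]
    [AddCommGroup V] [Module k V] [AddTorsor V P] [FiniteDimensional k V] {p : ι → P}
    (hp : AffineIndependent k p) (hcard : Fintype.card ι = Module.finrank k V + 1) :
    ⇑(hp.affineBasis hcard) = p :=
  rfl

theorem AffineBasis.eq_coord_of_apply_eq {ι k V P : Type*} [DecidableEq ι] [Ring k]
    [AddCommGroup V] [Module k V] [AddTorsor V P] (b : AffineBasis ι k P) (i : ι)
    (f : P →ᵃ[k] k) (hf : ∀ j, f (b j) = if i = j then 1 else 0) : f = b.coord i :=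
  AffineMap.ext_on b.tot <| by
    rintro - ⟨j, rfl⟩
    rw [hf, b.coord_apply]

theorem AffineBasis.convexHull_subset_closure_interior {ι E : Type*} [Fintype ι]
    [NormedAddCommGroup E] [NormedSpace ℝ E] (b : AffineBasis ι ℝ E) :
    convexHull ℝ (range b) ⊆ closure (interior (convexHull ℝ (range b))) := by
  rw [(convex_convexHull ℝ _).closure_interior_eq_closure_of_nonempty_interior
    ⟨_, b.centroid_mem_interior_convexHull⟩]
  exact subset_closure

theorem eqOn_zero_of_setIntegral_mul_sq_eq_zero {X : Type*} [TopologicalSpace X]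
    [MeasurableSpace X] [OpensMeasurableSpace X] {μ : Measure X} [μ.IsOpenPosMeasure]
    {s : Set X} {w f : X → ℝ} (hs : MeasurableSet s) (hs_closure : s ⊆ closure (interior s))
    (hw : ContinuousOn w s) (hf : ContinuousOn f s) (hw_nonneg : ∀ x ∈ s, 0 ≤ w x)
    (hw_pos : ∀ x ∈ interior s, 0 < w x) (hint : IntegrableOn (fun x ↦ w x * f x ^ 2) s μ)
    (h : ∫ x in s, w x * f x ^ 2 ∂μ = 0) : EqOn f 0 s := by
  have hg_nonneg : 0 ≤ᵐ[μ.restrict s] fun x ↦ w x * f x ^ 2 :=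
    ae_restrict_of_forall_mem hs fun x hx ↦ mul_nonneg (hw_nonneg x hx) (sq_nonneg _)
  have hg_zero : EqOn (fun x ↦ w x * f x ^ 2) 0 s :=
    Measure.eqOn_of_ae_eq ((setIntegral_eq_zero_iff_of_nonneg_ae hg_nonneg hint).mp h)
      (hw.mul (hf.pow 2)) continuousOn_const hs_closure
  have hf_interior : EqOn f 0 (interior s) := fun x hx ↦ by
    simpa [(hw_pos x hx).ne'] using hg_zero (interior_subset hx)
  exact hf_interior.of_subset_closure hf continuousOn_const interior_subset hs_closure

/-- On a nondegenerate triangle `F` with barycentric coordinates `λ₀, λ₁, λ₂`, if an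
affine polynomial `p` satisfies `∫_F λ₁ λ₂ q p = 0` for all affine `q`, then `p = 0`
on `F`. -/
theorem affine_orthogonal_to_bubble_P1_on_triangle_is_zero
    (x0 x1 x2 : Fin 2 → ℝ) (hind : AffineIndependent ℝ ![x0, x1, x2])
    (l1 l2 p : (Fin 2 → ℝ) →ᵃ[ℝ] ℝ)
    (hl1 : l1 x0 = 0 ∧ l1 x1 = 1 ∧ l1 x2 = 0)
    (hl2 : l2 x0 = 0 ∧ l2 x1 = 0 ∧ l2 x2 = 1)
    (horth : ∀ q : (Fin 2 → ℝ) →ᵃ[ℝ] ℝ,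
      ∫ x in convexHull ℝ ({x0, x1, x2} : Set (Fin 2 → ℝ)),
        l1 x * l2 x * q x * p x = 0) :
    ∀ x ∈ convexHull ℝ ({x0, x1, x2} : Set (Fin 2 → ℝ)), p x = 0 := by
  set b := hind.affineBasis (by simp)
  have hF : convexHull ℝ ({x0, x1, x2} : Set (Fin 2 → ℝ)) = convexHull ℝ (range b) := by
    rw [AffineIndependent.coe_affineBasis, Matrix.range_cons, Matrix.range_cons_cons_empty,
      singleton_union]
  have hl1b : l1 = b.coord 1 := b.eq_coord_of_apply_eq 1 l1 <| by
    simp [Fin.forall_fin_succ, b, hl1]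
  have hl2b : l2 = b.coord 2 := b.eq_coord_of_apply_eq 2 l2 <| by
    simp [Fin.forall_fin_succ, b, hl2]
  subst hl1b hl2b
  have hl1c := continuous_barycentric_coord b 1
  have hl2c := continuous_barycentric_coord b 2
  have hpc := p.continuous_of_finiteDimensional
  have hcompact : IsCompact (convexHull ℝ (range b)) :=
    (finite_range b).isCompact_convexHull (𝕜 := ℝ)
  rw [hF]
  refine eqOn_zero_of_setIntegral_mul_sq_eq_zero (μ := volume)
    (w := fun x ↦ b.coord 1 x * b.coord 2 x) hcompact.isClosed.measurableSet
    b.convexHull_subset_closure_interior (by fun_prop)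
    hpc.continuousOn (fun x hx ↦ ?_) (fun x hx ↦ ?_) ?_ ?_
  · rw [b.convexHull_eq_nonneg_coord] at hx
    exact mul_nonneg (hx 1) (hx 2)
  · rw [b.interior_convexHull] at hx
    exact mul_pos (hx 1) (hx 2)
  · exact ContinuousOn.integrableOn_compact hcompact (by fun_prop)
  · simpa [← hF, sq, mul_assoc] using horth p
end

section
/- Let F be a plane in R^3 (identified with the x–y plane) and let v be a rigid motion jump of the form v(x,y) = (a1 + b12 y, a2 - b12 x, a3 - b13 x - b23 y). If v·t = 0 on F for every vector t parallel to a fixed plane P that is not parallel to F, then b12 = b13 = b23 = 0 and v is a constant vector on F. -/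
/-- Let `F` be the plane `{z = 0}` in `ℝ³` and let
`v(x,y) = (a1 + b12 y, a2 - b12 x, a3 - b13 x - b23 y)` be a rigid-motion jump.
If `v · t = 0` on `F` for every `t` in a fixed 2-dimensional subspace `P` that is not
the span of `e1, e2` (i.e. not parallel to `F`), then `b12 = b13 = b23 = 0` and `v` is
a constant vector on `F`. -/
theorem rigid_jump_orthogonal_to_plane_is_constant
    (a1 a2 a3 b12 b13 b23 : ℝ) (P : Submodule ℝ (Fin 3 → ℝ))
    (hdim : Module.finrank ℝ P = 2)
    (hP : P ≠ Submodule.span ℝ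
      ({Pi.single 0 1, Pi.single 1 1} : Set (Fin 3 → ℝ)))
    (h : ∀ t ∈ P, ∀ x y : ℝ,
      (a1 + b12 * y) * t 0 + (a2 - b12 * x) * t 1 +
        (a3 - b13 * x - b23 * y) * t 2 = 0) :
    b12 = 0 ∧ b13 = 0 ∧ b23 = 0 ∧
      ∀ x y : ℝ,
        (![a1 + b12 * y, a2 - b12 * x, a3 - b13 * x - b23 * y] : Fin 3 → ℝ) =
          ![a1, a2, a3] := by
  -- Coefficient identities for every `t ∈ P`.
  have E1 : ∀ t ∈ P, b12 * t 1 + b13 * t 2 = 0 := by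
    intro t ht
    have h0 := h t ht 0 0
    have h1 := h t ht 1 0
    linear_combination h0 - h1
  have E2 : ∀ t ∈ P, b12 * t 0 - b23 * t 2 = 0 := by
    intro t ht
    have h0 := h t ht 0 0
    have h2 := h t ht 0 1
    linear_combination h2 - h0
  -- There is `t ∈ P` with `t 2 ≠ 0`.
  have hex : ∃ t ∈ P, t 2 ≠ 0 := by
    by_contra hcon
    push_neg at hcon
    apply hP
    apply Submodule.eq_of_le_of_finrank_le
    · intro t ht
      have htt : t = t 0 • (Pi.single 0 1 : Fin 3 → ℝ) + t 1 • (Pi.single 1 1 : Fin 3 → ℝ) := by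
        funext i
        fin_cases i <;> simp [hcon t ht]
      rw [htt]
      exact add_mem
        (Submodule.smul_mem _ _ (Submodule.subset_span (by simp)))
        (Submodule.smul_mem _ _ (Submodule.subset_span (by simp)))
    · rw [hdim]
      refine le_trans (finrank_span_le_card
        ({Pi.single 0 1, Pi.single 1 1} : Set (Fin 3 → ℝ))) ?_
      rw [Set.toFinset_insert, Set.toFinset_singleton]
      exact (Finset.card_insert_le _ _).trans (by simp)
  obtain ⟨t, ht, ht2⟩ := hex
  -- There is a nonzero `s ∈ P` with `s 2 = 0`.
  have hker : ∃ s : Fin 3 → ℝ, s ∈ P ∧ s 2 = 0 ∧ s ≠ 0 := by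
    set f : P →ₗ[ℝ] ℝ := (LinearMap.proj 2).comp P.subtype with hf
    have hrn := LinearMap.finrank_range_add_finrank_ker f
    rw [hdim] at hrn
    have hr : Module.finrank ℝ (LinearMap.range f) ≤ 1 := by
      simpa using (LinearMap.range f).finrank_le
    have hk : 0 < Module.finrank ℝ (LinearMap.ker f) := by omega
    have hne : LinearMap.ker f ≠ ⊥ := by
      intro hb
      rw [hb] at hk
      simp at hk
    obtain ⟨s, hs, hs0⟩ := Submodule.exists_mem_ne_zero_of_ne_bot hne
    refine ⟨(s : Fin 3 → ℝ), s.2, ?_, ?_⟩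
    · simpa [hf] using hs
    · intro hc
      exact hs0 (Subtype.ext hc)
  obtain ⟨s, hsP, hs2, hs0⟩ := hker
  have hb12 : b12 = 0 := by
    have e1 := E1 s hsP
    have e2 := E2 s hsP
    rw [hs2] at e1 e2
    have hcase : s 0 ≠ 0 ∨ s 1 ≠ 0 := by
      by_contra hc
      push_neg at hc
      apply hs0
      funext i
      fin_cases i <;> simp [hc.1, hc.2, hs2]
    rcases hcase with h0 | h1
    · have : b12 * s 0 = 0 := by linarith
      exact (mul_eq_zero.mp this).resolve_right h0
    · have : b12 * s 1 = 0 := by linarith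
      exact (mul_eq_zero.mp this).resolve_right h1
  have hb13 : b13 = 0 := by
    have e1 := E1 t ht
    rw [hb12] at e1
    simp at e1
    rcases e1 with h | h
    · exact h
    · exact absurd h ht2
  have hb23 : b23 = 0 := by
    have e2 := E2 t ht
    rw [hb12] at e2
    simp at e2
    rcases e2 with h | h
    · exact h
    · exact absurd h ht2
  refine ⟨hb12, hb13, hb23, fun x y => ?_⟩
  funext i
  fin_cases i <;> simp [hb12, hb13, hb23]
end

section
/- For a piecewise quartic polynomial u on a segment E with endpoints p0, p1 and midpoint m (quartic on each of the two half-segments [p0,m] and [m,p1]): if u, ∂_t u, and ∂²_{tt} u vanish at the endpoints p0 and p1 (i.e., u = λ_m³ q on E with q piecewise linear and continuous at m), and additionally ∂_t u is continuous at m and ∂²_{tt}u(m) = 0, then u = 0 on E. -/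
open Polynomial

private lemma eval4 (p : Polynomial ℝ) (hp : p.natDegree ≤ 4) (x : ℝ) :
    p.eval x = p.coeff 0 + p.coeff 1 * x + p.coeff 2 * x^2 + p.coeff 3 * x^3
      + p.coeff 4 * x^4 := by
  rw [Polynomial.eval_eq_sum_range' (lt_of_le_of_lt hp (by norm_num : (4:ℕ) < 5))]
  simp [Finset.sum_range_succ]

private lemma deval4 (p : Polynomial ℝ) (hp : p.natDegree ≤ 4) (x : ℝ) :
    p.derivative.eval x = p.coeff 1 + 2 * p.coeff 2 * x + 3 * p.coeff 3 * x^2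
      + 4 * p.coeff 4 * x^3 := by
  have h : p.derivative.natDegree < 4 := by
    have := Polynomial.natDegree_derivative_le p
    omega
  rw [Polynomial.eval_eq_sum_range' h]
  simp [Finset.sum_range_succ, Polynomial.coeff_derivative]
  ring

private lemma ddeval4 (p : Polynomial ℝ) (hp : p.natDegree ≤ 4) (x : ℝ) :
    (derivative (derivative p)).eval x
      = 2 * p.coeff 2 + 6 * p.coeff 3 * x + 12 * p.coeff 4 * x^2 := by
  have h1 : p.derivative.natDegree ≤ 3 := by
    have := Polynomial.natDegree_derivative_le p; omega
  have h : (derivative (derivative p)).natDegree < 3 := by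
    have := Polynomial.natDegree_derivative_le p.derivative
    omega
  rw [Polynomial.eval_eq_sum_range' h]
  simp [Finset.sum_range_succ, Polynomial.coeff_derivative]
  ring

/-- A piecewise quartic `u` on a segment parametrized by `[0,1]` and subdivided at the
midpoint `1/2` (given by polynomials `u1` on `[0,1/2]` and `u2` on `[1/2,1]` of degree
at most 4): if `u, u', u''` vanish at the endpoints `0` and `1`, `u` and `u'` are
continuous at the midpoint, and `u''(1/2) = 0` (from both sides), then `u ≡ 0`. -/
theorem piecewise_quartic_vanishing_is_zero
    (u1 u2 : Polynomial ℝ)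
    (hd1 : u1.natDegree ≤ 4) (hd2 : u2.natDegree ≤ 4)
    (h10 : u1.eval 0 = 0)
    (h11 : u1.derivative.eval 0 = 0)
    (h12 : (derivative (derivative u1)).eval 0 = 0)
    (h20 : u2.eval 1 = 0)
    (h21 : u2.derivative.eval 1 = 0)
    (h22 : (derivative (derivative u2)).eval 1 = 0)
    (hcont : u1.eval (1/2) = u2.eval (1/2))
    (hcont' : u1.derivative.eval (1/2) = u2.derivative.eval (1/2))
    (hm1 : (derivative (derivative u1)).eval (1/2) = 0)
    (hm2 : (derivative (derivative u2)).eval (1/2) = 0) :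
    u1 = 0 ∧ u2 = 0 := by
  rw [eval4 u1 hd1] at h10 hcont
  rw [eval4 u2 hd2] at h20 hcont
  rw [deval4 u1 hd1] at h11 hcont'
  rw [deval4 u2 hd2] at h21 hcont'
  rw [ddeval4 u1 hd1] at h12 hm1
  rw [ddeval4 u2 hd2] at h22 hm2
  set a0 := u1.coeff 0; set a1 := u1.coeff 1; set a2 := u1.coeff 2
  set a3 := u1.coeff 3; set a4 := u1.coeff 4
  set b0 := u2.coeff 0; set b1 := u2.coeff 1; set b2 := u2.coeff 2
  set b3 := u2.coeff 3; set b4 := u2.coeff 4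
  norm_num at h10 h11 h12 h20 h21 h22 hcont hcont' hm1 hm2
  have e1 : a3 = -a4 := by linarith only [hm1, h12]
  have e2 : b3 = -3 * b4 := by linarith only [h22, hm2]
  have e3 : b2 = 3 * b4 := by linarith only [hm2, e2]
  have e4 : b1 = -b4 := by linarith only [h21, e2, e3]
  have e5 : b0 = 0 := by linarith only [h20, e2, e3, e4]
  have e6 : a4 = b4 := by linarith only [hcont, h10, h11, h12, e1, e2, e3, e4, e5]
  have e7 : a4 = -b4 := by linarith only [hcont', h11, h12, e1, e2, e3, e4]
  have hb4 : b4 = 0 := by linarith only [e6, e7]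
  have ha4 : a4 = 0 := by linarith only [e6, hb4]
  have ha3 : a3 = 0 := by linarith only [e1, ha4]
  have hb3 : b3 = 0 := by linarith only [e2, hb4]
  have hb2 : b2 = 0 := by linarith only [e3, hb4]
  have hb1 : b1 = 0 := by linarith only [e4, hb4]
  have hb0 : b0 = 0 := e5
  have e1 : a3 = -a4 := by linarith only [hm1, h12]
  have e2 : b3 = -3 * b4 := by linarith only [h22, hm2]
  have e3 : b2 = 3 * b4 := by linarith only [hm2, e2]
  have e4 : b1 = -b4 := by linarith only [h21, e2, e3]
  have e5 : b0 = 0 := by linarith only [h20, e2, e3, e4]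
  have e6 : a4 = b4 := by linarith only [hcont, h10, h11, h12, e1, e2, e3, e4, e5]
  have e7 : a4 = -b4 := by linarith only [hcont', h11, h12, e1, e2, e3, e4]
  have hb4 : b4 = 0 := by linarith only [e6, e7]
  have ha4 : a4 = 0 := by linarith only [e6, hb4]
  have ha3 : a3 = 0 := by linarith only [e1, ha4]
  have hb3 : b3 = 0 := by linarith only [e2, hb4]
  have hb2 : b2 = 0 := by linarith only [e3, hb4]
  have hb1 : b1 = 0 := by linarith only [e4, hb4]
  have hb0 : b0 = 0 := e5
  constructor <;> ext n <;> rcases n with _|_|_|_|_|n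
  · exact h10
  · exact h11
  · exact h12
  · exact ha3
  · exact ha4
  · exact Polynomial.coeff_eq_zero_of_natDegree_lt (by omega)
  · exact hb0
  · exact hb1
  · exact hb2
  · exact hb3
  · exact hb4
  · exact Polynomial.coeff_eq_zero_of_natDegree_lt (by omega)
end
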